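/- arXiv:2106.03585 — 3 statements merged into one kernel-verified Lean document; each statement's English description precedes it below -/
import Mathlib

section
/- Let G = (V, E) be a graph and define its augmented graph G⁺ by adding, for each vertex i ∈ V, a new vertex i_comp and an edge (i, i_comp). Given nonnegative weights ν⁺ on the edges of G⁺ (restricting to weights ν on E), the second smallest eigenvalue of the weighted graph Laplacian of G⁺ satisfies λ₂(Δ_{G⁺}(ν⁺)) ≥ (1/4)·min( λ₂(Δ_G(ν)), min_{i∈V} ν_{i,i_comp} ). -/
open Finset Matrix

/-- Weighted graph Laplacian of weights `w` (symmetric, zero on the diagonal). -/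
def lap {V : Type*} [Fintype V] [DecidableEq V] (w : V → V → ℝ) : Matrix V V ℝ :=
  fun i j => if i = j then ∑ k, w i k else - w i j

/-- The second smallest eigenvalue of a graph Laplacian, characterized variationally as the
infimum of the Rayleigh quotient over unit vectors orthogonal to the all-ones vector. -/
noncomputable def lam2 {V : Type*} [Fintype V] (L : Matrix V V ℝ) : ℝ :=
  sInf {r | ∃ x : V → ℝ, (∑ i, x i) = 0 ∧ (∑ i, (x i) ^ 2) = 1 ∧
    r = dotProduct x (L.mulVec x)}

/-! Write a test vector on `V ⊕ V` as `(a, b)`, with `a` on the original vertices and `b` on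
their copies. Its energy is the energy of `a` in `G` plus `∑ ν i (a i - b i) ^ 2`, hence at least
`λ₂(G) * S + (min ν) * T`, where `S` is the spread of `a` about its mean and
`T = ∑ (a i - b i) ^ 2`. For a unit vector of total sum zero, `S + T ≥ 1 / 4`: as `∑ b = -∑ a`,
Cauchy–Schwarz applied to `a - b` gives `(∑ a) ^ 2 / n ≤ T / 4`, and `∑ b ^ 2 ≤ 2 ∑ a ^ 2 + 2 T`
keeps the mass of `b` under control. -/

section Lam2

variable {V : Type*} [Fintype V] {L : Matrix V V ℝ}

lemma lam2_le (hL : ∀ x, 0 ≤ x ⬝ᵥ (L *ᵥ x)) {x : V → ℝ} (hsum : ∑ i, x i = 0)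
    (hsq : ∑ i, x i ^ 2 = 1) : lam2 L ≤ x ⬝ᵥ (L *ᵥ x) :=
  csInf_le ⟨0, by rintro r ⟨y, -, -, rfl⟩; exact hL y⟩ ⟨x, hsum, hsq, rfl⟩

lemma lam2_nonneg (hL : ∀ x, 0 ≤ x ⬝ᵥ (L *ᵥ x)) : 0 ≤ lam2 L :=
  Real.sInf_nonneg <| by rintro r ⟨x, -, -, rfl⟩; exact hL x

lemma lam2_mul_sum_sq_le (hL : ∀ x, 0 ≤ x ⬝ᵥ (L *ᵥ x)) {x : V → ℝ} (hsum : ∑ i, x i = 0) :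
    lam2 L * ∑ i, x i ^ 2 ≤ x ⬝ᵥ (L *ᵥ x) := by
  set S := ∑ i, x i ^ 2
  have hS0 : 0 ≤ S := sum_nonneg fun i _ => sq_nonneg (x i)
  rcases hS0.eq_or_lt with hS | hS
  · rw [← hS, mul_zero]
    exact hL x
  set s := Real.sqrt S
  have hs : s ^ 2 = S := Real.sq_sqrt hS.le
  have hunit := lam2_le hL (x := s⁻¹ • x)
    (by simp only [Pi.smul_apply, smul_eq_mul, ← mul_sum, hsum, mul_zero])
    (by simp only [Pi.smul_apply, smul_eq_mul, mul_pow, ← mul_sum, inv_pow, hs]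
        exact inv_mul_cancel₀ hS.ne')
  rw [mulVec_smul, smul_dotProduct, dotProduct_smul, smul_eq_mul, smul_eq_mul, ← mul_assoc,
    ← sq, inv_pow, hs] at hunit
  rwa [le_inv_mul_iff₀ hS, mul_comm] at hunit

lemma le_lam2 [DecidableEq V] {p q : V} (hpq : p ≠ q) {r : ℝ}
    (h : ∀ x : V → ℝ, ∑ i, x i = 0 → ∑ i, x i ^ 2 = 1 → r ≤ x ⬝ᵥ (L *ᵥ x)) :
    r ≤ lam2 L := by
  -- Without two distinct points the constraint set is empty and `lam2 L = sInf ∅ = 0`.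
  set s := (Real.sqrt 2)⁻¹
  have hs : s ^ 2 + s ^ 2 = 1 := by
    rw [inv_pow, Real.sq_sqrt zero_le_two]; norm_num
  refine le_csInf ⟨_, Pi.single p s - Pi.single q s, ?_, ?_, rfl⟩ ?_
  · simp
  · have hsq : ∀ i, (Pi.single p s - Pi.single q s : V → ℝ) i ^ 2
        = (Pi.single p (s ^ 2) : V → ℝ) i + (Pi.single q (s ^ 2) : V → ℝ) i := by
      intro i
      by_cases hp : i = p <;> by_cases hq : i = q <;> simp_all
    rw [sum_congr rfl fun i _ => hsq i, sum_add_distrib]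
    simpa using hs
  · rintro r ⟨x, hsum, hsq, rfl⟩
    exact h x hsum hsq

end Lam2

section Laplacian

variable {V : Type*} [Fintype V] [DecidableEq V] {w : V → V → ℝ}

lemma lap_mulVec_apply (hdiag : ∀ i, w i i = 0) (x : V → ℝ) (i : V) :
    (lap w *ᵥ x) i = ∑ j, w i j * (x i - x j) := by
  have hrow : ∀ j, lap w i j * x j = (if i = j then ∑ k, w i k * x i else 0) - w i j * x j := by
    intro j
    by_cases hij : i = j
    · subst hij; simp [lap, hdiag, sum_mul]
    · simp [lap, hij]
  simp only [mulVec, dotProduct, hrow, sum_sub_distrib, sum_ite_eq, mem_univ, if_true,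
    mul_sub]

lemma dotProduct_lap_mulVec (hdiag : ∀ i, w i i = 0) (x : V → ℝ) :
    x ⬝ᵥ (lap w *ᵥ x) = ∑ i, ∑ j, w i j * (x i * (x i - x j)) := by
  simp only [dotProduct, lap_mulVec_apply hdiag, mul_sum]
  exact sum_congr rfl fun i _ => sum_congr rfl fun j _ => by ring

lemma dotProduct_lap_mulVec_eq_half_sum_sq (hsymm : ∀ i j, w i j = w j i)
    (hdiag : ∀ i, w i i = 0) (x : V → ℝ) :
    x ⬝ᵥ (lap w *ᵥ x) = 1 / 2 * ∑ i, ∑ j, w i j * (x i - x j) ^ 2 := by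
  have hswap : x ⬝ᵥ (lap w *ᵥ x) = ∑ i, ∑ j, w i j * (x j * (x j - x i)) := by
    rw [dotProduct_lap_mulVec hdiag, sum_comm]
    simp only [hsymm]
  have htwice : 2 * x ⬝ᵥ (lap w *ᵥ x) = ∑ i, ∑ j, w i j * (x i - x j) ^ 2 := by
    rw [two_mul]
    nth_rw 1 [dotProduct_lap_mulVec hdiag]
    rw [hswap, ← sum_add_distrib]
    exact sum_congr rfl fun i _ => by rw [← sum_add_distrib]; exact sum_congr rfl fun j _ => by ring
  linarith

lemma dotProduct_lap_mulVec_nonneg (hsymm : ∀ i j, w i j = w j i) (hdiag : ∀ i, w i i = 0)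
    (hnonneg : ∀ i j, 0 ≤ w i j) (x : V → ℝ) : 0 ≤ x ⬝ᵥ (lap w *ᵥ x) := by
  rw [dotProduct_lap_mulVec_eq_half_sum_sq hsymm hdiag]
  have := sum_nonneg fun i (_ : i ∈ univ) => sum_nonneg fun j (_ : j ∈ univ) =>
    mul_nonneg (hnonneg i j) (sq_nonneg (x i - x j))
  positivity

lemma dotProduct_lap_mulVec_sub_const (hsymm : ∀ i j, w i j = w j i) (hdiag : ∀ i, w i i = 0)
    (x : V → ℝ) (c : ℝ) :
    (fun i => x i - c) ⬝ᵥ (lap w *ᵥ fun i => x i - c) = x ⬝ᵥ (lap w *ᵥ x) := by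
  simp only [dotProduct_lap_mulVec_eq_half_sum_sq hsymm hdiag, sub_sub_sub_cancel_right]

lemma lam2_lap_mul_sum_sq_sub_mean_le [Nonempty V] (hsymm : ∀ i j, w i j = w j i)
    (hdiag : ∀ i, w i i = 0) (hnonneg : ∀ i j, 0 ≤ w i j) (x : V → ℝ) :
    lam2 (lap w) * ∑ i, (x i - (∑ j, x j) / Fintype.card V) ^ 2 ≤ x ⬝ᵥ (lap w *ᵥ x) := by
  rw [← dotProduct_lap_mulVec_sub_const hsymm hdiag x ((∑ j, x j) / Fintype.card V)]
  refine lam2_mul_sum_sq_le (dotProduct_lap_mulVec_nonneg hsymm hdiag hnonneg) ?_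
  rw [sum_sub_distrib, sum_const, card_univ, nsmul_eq_mul]
  field_simp
  ring

end Laplacian

lemma dotProduct_lap_augmented_mulVec {V : Type*} [Fintype V] [DecidableEq V]
    {w : V → V → ℝ} (hdiag : ∀ i, w i i = 0) {ν : V → ℝ} {wplus : V ⊕ V → V ⊕ V → ℝ}
    (hw1 : ∀ i j, wplus (Sum.inl i) (Sum.inl j) = w i j)
    (hw2 : ∀ i, wplus (Sum.inl i) (Sum.inr i) = ν i)
    (hw2' : ∀ i, wplus (Sum.inr i) (Sum.inl i) = ν i)
    (hw3 : ∀ i j, i ≠ j → wplus (Sum.inl i) (Sum.inr j) = 0)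
    (hw3' : ∀ i j, i ≠ j → wplus (Sum.inr i) (Sum.inl j) = 0)
    (hw4 : ∀ i j, wplus (Sum.inr i) (Sum.inr j) = 0) (x : V ⊕ V → ℝ) :
    x ⬝ᵥ (lap wplus *ᵥ x) = (x ∘ Sum.inl) ⬝ᵥ (lap w *ᵥ (x ∘ Sum.inl))
      + ∑ i, ν i * (x (Sum.inl i) - x (Sum.inr i)) ^ 2 := by
  have hdiag_plus : ∀ p, wplus p p = 0 := by
    rintro (i | i)
    · rw [hw1, hdiag]
    · rw [hw4]
  have hinl : ∀ i, ∑ j, wplus (Sum.inl i) (Sum.inr j)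
      * (x (Sum.inl i) * (x (Sum.inl i) - x (Sum.inr j)))
      = ν i * (x (Sum.inl i) * (x (Sum.inl i) - x (Sum.inr i))) := fun i => by
    rw [Fintype.sum_eq_single i fun j hj => by rw [hw3 i j (Ne.symm hj), zero_mul], hw2]
  have hinr : ∀ i, ∑ j, wplus (Sum.inr i) (Sum.inl j)
      * (x (Sum.inr i) * (x (Sum.inr i) - x (Sum.inl j)))
      = ν i * (x (Sum.inr i) * (x (Sum.inr i) - x (Sum.inl i))) := fun i => by
    rw [Fintype.sum_eq_single i fun j hj => by rw [hw3' i j (Ne.symm hj), zero_mul], hw2']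
  simp only [dotProduct_lap_mulVec hdiag_plus, dotProduct_lap_mulVec hdiag, Fintype.sum_sum_type,
    hw1, hw4, zero_mul, sum_const_zero, add_zero, hinl, hinr, Function.comp_apply]
  rw [sum_add_distrib, add_assoc, ← sum_add_distrib]
  congr 1
  exact sum_congr rfl fun i _ => by ring

lemma one_div_four_le_sum_sq_sub_mean_add_sum_sq_sub {ι : Type*} [Fintype ι] [Nonempty ι]
    {a b : ι → ℝ} (hsum : ∑ i, a i + ∑ i, b i = 0) (hsq : ∑ i, a i ^ 2 + ∑ i, b i ^ 2 = 1) :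
    1 / 4 ≤ ∑ i, (a i - (∑ j, a j) / Fintype.card ι) ^ 2 + ∑ i, (a i - b i) ^ 2 := by
  set n : ℝ := (Fintype.card ι : ℝ)
  have hn : 0 < n := by simp [n, Fintype.card_pos]
  have hvar : ∑ i, (a i - (∑ j, a j) / n) ^ 2 = ∑ i, a i ^ 2 - (∑ i, a i) ^ 2 / n := by
    simp only [sub_sq, sum_add_distrib, sum_sub_distrib, ← sum_mul, ← mul_sum, sum_const,
      card_univ, nsmul_eq_mul]
    field_simp
    ring
  have hcs : (2 * ∑ i, a i) ^ 2 ≤ n * ∑ i, (a i - b i) ^ 2 := by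
    have := sq_sum_le_card_mul_sum_sq (s := univ) (f := fun i => a i - b i)
    rwa [sum_sub_distrib, card_univ, show ∑ i, b i = -∑ i, a i by linarith, sub_neg_eq_add,
      ← two_mul] at this
  have hmean : (∑ i, a i) ^ 2 / n ≤ (∑ i, (a i - b i) ^ 2) / 4 := by
    rw [div_le_div_iff₀ hn four_pos]
    nlinarith
  have hb : ∑ i, b i ^ 2 ≤ 2 * ∑ i, a i ^ 2 + 2 * ∑ i, (a i - b i) ^ 2 := by
    rw [mul_sum, mul_sum, ← sum_add_distrib]
    exact sum_le_sum fun i _ => by nlinarith [sq_nonneg (a i + (a i - b i))]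
  have hT : 0 ≤ ∑ i, (a i - b i) ^ 2 := sum_nonneg fun i _ => sq_nonneg _
  linarith

theorem lam2_augmented_graph_general {V : Type*} [Fintype V] [DecidableEq V] [Nonempty V]
    (w : V → V → ℝ) (hsymm : ∀ i j, w i j = w j i) (hdiag : ∀ i, w i i = 0)
    (hnonneg : ∀ i j, 0 ≤ w i j)
    (ν : V → ℝ) (hν : ∀ i, 0 < ν i)
    (wplus : (V ⊕ V) → (V ⊕ V) → ℝ)
    (hw1 : ∀ i j, wplus (Sum.inl i) (Sum.inl j) = w i j)
    (hw2 : ∀ i, wplus (Sum.inl i) (Sum.inr i) = ν i)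
    (hw2' : ∀ i, wplus (Sum.inr i) (Sum.inl i) = ν i)
    (hw3 : ∀ i j, i ≠ j → wplus (Sum.inl i) (Sum.inr j) = 0)
    (hw3' : ∀ i j, i ≠ j → wplus (Sum.inr i) (Sum.inl j) = 0)
    (hw4 : ∀ i j, wplus (Sum.inr i) (Sum.inr j) = 0) :
    lam2 (lap wplus) ≥ (1 / 4) * min (lam2 (lap w)) (univ.inf' univ_nonempty ν) := by
  set c := min (lam2 (lap w)) (univ.inf' univ_nonempty ν)
  have hc : 0 ≤ c := le_min (lam2_nonneg (dotProduct_lap_mulVec_nonneg hsymm hdiag hnonneg))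
    ((le_inf'_iff _ _).2 fun i _ => (hν i).le)
  have hcν : ∀ i, c ≤ ν i := fun i => (min_le_right _ _).trans (inf'_le _ (mem_univ i))
  obtain ⟨i₀⟩ := ‹Nonempty V›
  refine le_lam2 (Sum.inl_ne_inr (a := i₀) (b := i₀)) fun x hsum hsq => ?_
  rw [Fintype.sum_sum_type] at hsum hsq
  rw [dotProduct_lap_augmented_mulVec hdiag hw1 hw2 hw2' hw3 hw3' hw4]
  set a := x ∘ Sum.inl
  set b := x ∘ Sum.inr
  set S := ∑ i, (a i - (∑ j, a j) / Fintype.card V) ^ 2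
  set T := ∑ i, (a i - b i) ^ 2
  have hS : 0 ≤ S := sum_nonneg fun i _ => sq_nonneg _
  calc 1 / 4 * c ≤ c * (S + T) := by
        rw [mul_comm]
        exact mul_le_mul_of_nonneg_left
          (one_div_four_le_sum_sq_sub_mean_add_sum_sq_sub (a := a) (b := b) hsum hsq) hc
    _ ≤ lam2 (lap w) * S + ∑ i, ν i * (a i - b i) ^ 2 := by
        rw [mul_add]
        refine add_le_add (mul_le_mul_of_nonneg_right (min_le_left _ _) hS) ?_
        rw [mul_sum]
        exact sum_le_sum fun i _ => mul_le_mul_of_nonneg_right (hcν i) (sq_nonneg _)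
    _ ≤ a ⬝ᵥ (lap w *ᵥ a) + ∑ i, ν i * (a i - b i) ^ 2 := by
        gcongr
        exact lam2_lap_mul_sum_sq_sub_mean_le hsymm hdiag hnonneg a

theorem lam2_augmented_graph {V : Type*} [Fintype V] [DecidableEq V] [Nonempty V]
    (w : V → V → ℝ) (hsymm : ∀ i j, w i j = w j i) (hdiag : ∀ i, w i i = 0)
    (hnonneg : ∀ i j, 0 ≤ w i j) (hlam2 : 0 < lam2 (lap w))
    (ν : V → ℝ) (hν : ∀ i, 0 < ν i)
    (wplus : (V ⊕ V) → (V ⊕ V) → ℝ)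
    (hw1 : ∀ i j, wplus (Sum.inl i) (Sum.inl j) = w i j)
    (hw2 : ∀ i, wplus (Sum.inl i) (Sum.inr i) = ν i)
    (hw2' : ∀ i, wplus (Sum.inr i) (Sum.inl i) = ν i)
    (hw3 : ∀ i j, i ≠ j → wplus (Sum.inl i) (Sum.inr j) = 0)
    (hw3' : ∀ i j, i ≠ j → wplus (Sum.inr i) (Sum.inl j) = 0)
    (hw4 : ∀ i j, wplus (Sum.inr i) (Sum.inr j) = 0) :
    lam2 (lap wplus) ≥ (1 / 4) * min (lam2 (lap w)) (univ.inf' univ_nonempty ν) :=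
  lam2_augmented_graph_general w hsymm hdiag hnonneg ν hν wplus hw1 hw2 hw2' hw3 hw3' hw4
end

section
/- Let f_i : ℝ^d → ℝ be σ-strongly convex and L-smooth for each i ∈ V, let A ∈ ℝ^{V×E} with A e_{ij} = μ_{ij}(e_i - e_j), and define F_A*(λ) = Σ_{i∈V} f_i*((Aλ)_i) where f_i* is the Fenchel conjugate. Then for each edge (ij), F_A* is L_{ij}-smooth on the coordinate subspace E_{ij} with L_{ij} = 4 μ_{ij}² σ^{-1}. -/
open Finset

/-- Fenchel conjugate of a function on a Euclidean space. -/
noncomputable def fenchel {d : ℕ} (g : EuclideanSpace ℝ (Fin d) → ℝ)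
    (y : EuclideanSpace ℝ (Fin d)) : ℝ :=
  ⨆ x : EuclideanSpace ℝ (Fin d), (inner ℝ x y : ℝ) - g x

/-!
If `g` is `σ`-strongly convex and differentiable, `∇g` is `σ`-strongly monotone and, by
coercivity, onto; so `∇g x = y` has a solution, which is where the supremum defining `g* y` is
attained, and it is the gradient of `g*` at `y`. Strong monotonicity makes `y ↦ x`
`σ⁻¹`-Lipschitz, whence `g* (y + v) ≤ g* y + ⟪∇g* y, v⟫ + σ⁻¹ ‖v‖²`. Moving `λ` along the block
`e` moves `(Aλ)_i` by `A i e • h`, and the column `e` of `A` has `∑ i, A i e ^ 2 = 2 μ_e ^ 2`;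
summing the bounds over `i` gives the constant `2 μ_e ^ 2 σ⁻¹ = L_e / 2`.
-/

open scoped RealInnerProductSpace
open Set Filter Topology Asymptotics

theorem ConvexOn.add_le_of_hasFDerivAt {E : Type*} [NormedAddCommGroup E] [NormedSpace ℝ E]
    {g : E → ℝ} (hg : ConvexOn ℝ univ g) {g' : E →L[ℝ] ℝ} {x : E} (hx : HasFDerivAt g g' x)
    (y : E) : g x + g' (y - x) ≤ g y := by
  set ℓ : ℝ →ᵃ[ℝ] E := AffineMap.lineMap x y
  have hline : ConvexOn ℝ univ (g ∘ ℓ) := by simpa using hg.comp_affineMap ℓ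
  have hderiv : HasDerivAt (g ∘ ℓ) (g' (y - x)) 0 := by
    refine HasFDerivAt.comp_hasDerivAt 0 ?_ AffineMap.hasDerivAt_lineMap
    simpa [ℓ] using hx
  have := hline.le_slope_of_hasDerivAt (mem_univ 0) (mem_univ 1) one_pos hderiv
  simp only [slope_def_field, Function.comp_apply, ℓ, AffineMap.lineMap_apply_zero,
    AffineMap.lineMap_apply_one, sub_zero, div_one] at this
  linarith

section InnerProductSpace

variable {F : Type*} [NormedAddCommGroup F] [InnerProductSpace ℝ F] [CompleteSpace F]
  {g : F → ℝ} {σ : ℝ}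

theorem ConvexOn.inner_sub_le_of_hasGradientAt (hg : ConvexOn ℝ univ g) {x y : F}
    (hx : HasGradientAt g y x) (z : F) : ⟪z, y⟫ - g z ≤ ⟪x, y⟫ - g x := by
  have := hg.add_le_of_hasFDerivAt hx.hasFDerivAt z
  rw [InnerProductSpace.toDual_apply_apply, inner_sub_right, real_inner_comm z y,
    real_inner_comm x y] at this
  linarith

theorem StrongConvexOn.add_inner_add_le_of_hasGradientAt (hg : StrongConvexOn univ σ g)
    {x p : F} (hx : HasGradientAt g p x) (y : F) :
    g x + ⟪p, y - x⟫ + σ / 2 * ‖y - x‖ ^ 2 ≤ g y := by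
  have hq := (strongConvexOn_iff_convex.mp hg).add_le_of_hasFDerivAt
    (hx.hasFDerivAt.sub ((hasStrictFDerivAt_norm_sq x).hasFDerivAt.const_mul (σ / 2))) y
  simp only [sub_apply, smul_apply, InnerProductSpace.toDual_apply_apply, innerSL_apply_apply,
    smul_eq_mul, nsmul_eq_mul, Nat.cast_ofNat, inner_sub_right, real_inner_self_eq_norm_sq] at hq
  rw [inner_sub_right, norm_sub_sq_real, real_inner_comm x y]
  linarith

theorem StrongConvexOn.mul_norm_sub_le_of_hasGradientAt (hg : StrongConvexOn univ σ g)
    {x₁ x₂ p₁ p₂ : F} (h₁ : HasGradientAt g p₁ x₁) (h₂ : HasGradientAt g p₂ x₂) :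
    σ * ‖x₁ - x₂‖ ≤ ‖p₁ - p₂‖ := by
  have a₁ := hg.add_inner_add_le_of_hasGradientAt h₁ x₂
  have a₂ := hg.add_inner_add_le_of_hasGradientAt h₂ x₁
  have hmono : σ * ‖x₁ - x₂‖ ^ 2 ≤ ‖p₁ - p₂‖ * ‖x₁ - x₂‖ := by
    refine le_trans ?_ (real_inner_le_norm (p₁ - p₂) (x₁ - x₂))
    rw [norm_sub_rev x₂ x₁, ← neg_sub x₁ x₂, inner_neg_right] at a₁
    rw [inner_sub_left]
    linarith
  rcases (norm_nonneg (x₁ - x₂)).eq_or_lt with h | h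
  · rw [← h, mul_zero]; exact norm_nonneg _
  · exact le_of_mul_le_mul_right (by nlinarith) h

theorem StrongConvexOn.exists_hasGradientAt_eq [ProperSpace F] (hσ : 0 < σ)
    (hg : StrongConvexOn univ σ g) (hd : Differentiable ℝ g) (y : F) :
    ∃ x, HasGradientAt g y x := by
  set φ : F → ℝ := fun z => g z - InnerProductSpace.toDual ℝ F y z
  have hsublevel : {z | φ z ≤ φ 0} ⊆ Metric.closedBall 0 (2 * ‖gradient g 0 - y‖ / σ) := by
    intro z hz
    have hlow := hg.add_inner_add_le_of_hasGradientAt (hd 0).hasGradientAt z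
    have hcs := real_inner_le_norm (y - gradient g 0) z
    simp only [mem_ofPred_eq, φ, InnerProductSpace.toDual_apply_apply, inner_zero_right,
      sub_zero] at hz hlow
    rw [inner_sub_left, norm_sub_rev] at hcs
    rw [Metric.mem_closedBall, dist_zero_right, le_div_iff₀ hσ]
    nlinarith [norm_nonneg z, norm_nonneg (gradient g 0 - y)]
  obtain ⟨x, hx⟩ := (hd.continuous.sub (InnerProductSpace.toDual ℝ F y).continuous
    ).exists_forall_le_of_isBounded 0 (Metric.isBounded_closedBall.subset hsublevel)
  have hcrit := (IsLocalMin.hasFDerivAt_eq_zero (Eventually.of_forall hx)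
    ((hd x).hasGradientAt.hasFDerivAt.sub (InnerProductSpace.toDual ℝ F y).hasFDerivAt))
  rw [sub_eq_zero, (InnerProductSpace.toDual ℝ F).injective.eq_iff] at hcrit
  exact ⟨x, hcrit ▸ (hd x).hasGradientAt⟩

end InnerProductSpace

section Conjugate

variable {d : ℕ} {g : EuclideanSpace ℝ (Fin d) → ℝ} {σ : ℝ}

theorem ConvexOn.fenchel_eq_of_hasGradientAt (hg : ConvexOn ℝ univ g)
    {x y : EuclideanSpace ℝ (Fin d)} (hx : HasGradientAt g y x) :
    fenchel g y = ⟪x, y⟫ - g x :=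
  le_antisymm (ciSup_le (hg.inner_sub_le_of_hasGradientAt hx))
    (le_ciSup ⟨_, forall_mem_range.2 (hg.inner_sub_le_of_hasGradientAt hx)⟩ x)

theorem ConvexOn.fenchel_add_inner_le_fenchel_add (hg : ConvexOn ℝ univ g)
    {x₁ x₂ y v : EuclideanSpace ℝ (Fin d)} (h₁ : HasGradientAt g y x₁)
    (h₂ : HasGradientAt g (y + v) x₂) :
    fenchel g y + ⟪x₁, v⟫ ≤ fenchel g (y + v) := by
  have := hg.inner_sub_le_of_hasGradientAt h₂ x₁
  rw [inner_add_right] at this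
  rw [hg.fenchel_eq_of_hasGradientAt h₁, hg.fenchel_eq_of_hasGradientAt h₂]
  linarith

theorem StrongConvexOn.fenchel_add_le (hσ : 0 < σ) (hg : StrongConvexOn univ σ g)
    {x₁ x₂ y v : EuclideanSpace ℝ (Fin d)} (h₁ : HasGradientAt g y x₁)
    (h₂ : HasGradientAt g (y + v) x₂) :
    fenchel g (y + v) ≤ fenchel g y + ⟪x₁, v⟫ + σ⁻¹ * ‖v‖ ^ 2 := by
  have hconv : ConvexOn ℝ univ g := hg.convexOn fun r => by positivity
  have hdom := hconv.inner_sub_le_of_hasGradientAt h₁ x₂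
  have hlip : ‖x₂ - x₁‖ ≤ σ⁻¹ * ‖v‖ := by
    rw [inv_mul_eq_div, le_div_iff₀' hσ]
    simpa using hg.mul_norm_sub_le_of_hasGradientAt h₂ h₁
  have hcs : ⟪x₂ - x₁, v⟫ ≤ σ⁻¹ * ‖v‖ ^ 2 := calc
    ⟪x₂ - x₁, v⟫ ≤ ‖x₂ - x₁‖ * ‖v‖ := real_inner_le_norm _ _
    _ ≤ σ⁻¹ * ‖v‖ * ‖v‖ := by gcongr
    _ = σ⁻¹ * ‖v‖ ^ 2 := by ring
  rw [inner_sub_left] at hcs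
  rw [hconv.fenchel_eq_of_hasGradientAt h₁, hconv.fenchel_eq_of_hasGradientAt h₂, inner_add_right]
  linarith

theorem StrongConvexOn.hasGradientAt_fenchel (hσ : 0 < σ) (hg : StrongConvexOn univ σ g)
    (hd : Differentiable ℝ g) {x y : EuclideanSpace ℝ (Fin d)} (hx : HasGradientAt g y x) :
    HasGradientAt (fenchel g) x y := by
  have hconv : ConvexOn ℝ univ g := hg.convexOn fun r => by positivity
  rw [hasGradientAt_iff_hasFDerivAt, hasFDerivAt_iff_isLittleO_nhds_zero]
  refine IsBigO.trans_isLittleO (g := fun v => ‖v‖ ^ 2) ?_ (isLittleO_norm_pow_id one_lt_two)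
  refine IsBigO.of_bound σ⁻¹ (Eventually.of_forall fun v => ?_)
  obtain ⟨x', hx'⟩ := hg.exists_hasGradientAt_eq hσ hd (y + v)
  have hlow := hconv.fenchel_add_inner_le_fenchel_add hx hx'
  have hupp := hg.fenchel_add_le hσ hx hx'
  rw [InnerProductSpace.toDual_apply_apply, Real.norm_eq_abs, norm_pow, norm_norm, abs_le]
  constructor <;> nlinarith [inv_pos.2 hσ, sq_nonneg ‖v‖]

end Conjugate

theorem PiLp.inner_single_right {E : Type*} [Fintype E] [DecidableEq E] {β : E → Type*}
    [∀ e, NormedAddCommGroup (β e)] [∀ e, InnerProductSpace ℝ (β e)] (x : PiLp 2 β) (e : E)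
    (h : β e) : ⟪x, PiLp.single 2 e h⟫ = ⟪x e, h⟫ := by
  rw [PiLp.inner_apply, Finset.sum_eq_single_of_mem e (Finset.mem_univ e)
    fun e' _ he' => by rw [PiLp.single_eq_of_ne 2 he', inner_zero_right], PiLp.single_eq_same]

theorem PiLp.toLp_update_add {E : Type*} [DecidableEq E] {p : ENNReal} {β : E → Type*}
    [∀ e, SeminormedAddCommGroup (β e)] (lam : PiLp p β) (e : E) (h : β e) :
    WithLp.toLp p (Function.update lam e (lam e + h)) = lam + PiLp.single p e h := by
  ext e'
  rcases eq_or_ne e' e with rfl | he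
  · simp
  · simp [he]

section Blocks

variable {V E F : Type*} [Fintype E] [NormedAddCommGroup F] [InnerProductSpace ℝ F]

def blockRow (A : Matrix V E ℝ) (i : V) : PiLp 2 (fun _ : E => F) →L[ℝ] F :=
  ∑ e, A i e • PiLp.proj 2 (fun _ : E => F) e

theorem blockRow_apply (A : Matrix V E ℝ) (i : V) (lam : PiLp 2 (fun _ : E => F)) :
    blockRow A i lam = ∑ e, A i e • lam e := by
  simp [blockRow]

theorem blockRow_single [DecidableEq E] (A : Matrix V E ℝ) (i : V) (e : E) (h : F) :
    blockRow A i (PiLp.single 2 e h) = A i e • h := by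
  simp [blockRow_apply, PiLp.single_apply]

end Blocks

theorem sum_sq_mul_ite_sub_ite {V : Type*} [Fintype V] [DecidableEq V] {a b : V} (hab : a ≠ b)
    (m : ℝ) :
    ∑ i, (m * ((if i = a then 1 else 0) - (if i = b then 1 else 0))) ^ 2 = 2 * m ^ 2 := by
  have hterm : ∀ i, (m * ((if i = a then 1 else 0) - (if i = b then 1 else 0))) ^ 2
      = m ^ 2 * ((if i = a then 1 else 0) + (if i = b then 1 else 0)) := by
    intro i
    rcases eq_or_ne i a with rfl | hia
    · simp [hab]
    · rcases eq_or_ne i b with rfl | hib <;> simp [*]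
  simp only [hterm, ← Finset.mul_sum, Finset.sum_add_distrib, Finset.sum_ite_eq',
    Finset.mem_univ, if_true]
  ring

theorem dual_block_smoothness_general
    {V E : Type*} [Fintype V] [Fintype E] [DecidableEq V] [DecidableEq E]
    (d : ℕ) (σ : ℝ) (hσ : 0 < σ)
    (ep1 ep2 : E → V) (hloop : ∀ e, ep1 e ≠ ep2 e)
    (μ : E → ℝ)
    (A : Matrix V E ℝ)
    (hA : ∀ e i, A i e = μ e * ((if i = ep1 e then 1 else 0) - (if i = ep2 e then 1 else 0)))
    (f : V → EuclideanSpace ℝ (Fin d) → ℝ)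
    (hsc : ∀ i, StrongConvexOn Set.univ σ (f i))
    (hdiff : ∀ i, Differentiable ℝ (f i))
    (FAstar : PiLp 2 (fun _ : E => EuclideanSpace ℝ (Fin d)) → ℝ)
    (hFAstar : ∀ lam, FAstar lam = ∑ i, fenchel (f i) (∑ e, A i e • lam e))
    (e : E) :
    ∀ (lam : PiLp 2 (fun _ : E => EuclideanSpace ℝ (Fin d)))
      (h : EuclideanSpace ℝ (Fin d)),
      FAstar (WithLp.toLp 2 (Function.update lam e (lam e + h))) ≤
        FAstar lam + (inner ℝ ((gradient FAstar lam) e) h : ℝ) +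
          ((4 * μ e ^ 2 * σ⁻¹) / 2) * ‖h‖ ^ 2 := by
  intro lam h
  have hF : FAstar = fun l => ∑ i, fenchel (f i) (blockRow A i l) := by
    funext l; simp [hFAstar, blockRow_apply]
  choose x hx using fun i => (hsc i).exists_hasGradientAt_eq hσ (hdiff i) (blockRow A i lam)
  choose x' hx' using fun i =>
    (hsc i).exists_hasGradientAt_eq hσ (hdiff i) (blockRow A i lam + A i e • h)
  have hderiv : HasFDerivAt FAstar
      (∑ i, (InnerProductSpace.toDual ℝ _ (x i)).comp (blockRow A i)) lam := by
    rw [hF]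
    exact HasFDerivAt.fun_sum fun i _ =>
      ((hsc i).hasGradientAt_fenchel hσ (hdiff i) (hx i)).hasFDerivAt.comp lam
        (blockRow A i).hasFDerivAt
  have hgrad : ⟪gradient FAstar lam e, h⟫ = ∑ i, ⟪x i, A i e • h⟫ := by
    rw [← PiLp.inner_single_right, (hasFDerivAt_iff_hasGradientAt.mp hderiv).gradient,
      InnerProductSpace.toDual_symm_apply]
    simp [blockRow_single, inner_smul_right]
  have hcol : ∑ i, A i e ^ 2 = 2 * μ e ^ 2 := by
    simpa only [hA] using sum_sq_mul_ite_sub_ite (hloop e) (μ e)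
  rw [PiLp.toLp_update_add, hgrad, hF]
  calc ∑ i, fenchel (f i) (blockRow A i (lam + PiLp.single 2 e h))
      = ∑ i, fenchel (f i) (blockRow A i lam + A i e • h) := by
        simp only [map_add, blockRow_single]
    _ ≤ ∑ i, (fenchel (f i) (blockRow A i lam) + ⟪x i, A i e • h⟫ + σ⁻¹ * ‖A i e • h‖ ^ 2) :=
        Finset.sum_le_sum fun i _ => (hsc i).fenchel_add_le hσ (hx i) (hx' i)
    _ = _ := by
        simp only [Finset.sum_add_distrib, norm_smul, mul_pow, Real.norm_eq_abs, sq_abs,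
          ← Finset.sum_mul, ← Finset.mul_sum, hcol]
        ring

theorem dual_block_smoothness
    {V E : Type*} [Fintype V] [Fintype E] [DecidableEq V] [DecidableEq E]
    (d : ℕ) (σ L : ℝ) (hσ : 0 < σ) (hL : 0 < L)
    (ep1 ep2 : E → V) (hloop : ∀ e, ep1 e ≠ ep2 e)
    (μ : E → ℝ) (hμ : ∀ e, μ e ≠ 0)
    (A : Matrix V E ℝ)
    (hA : ∀ e i, A i e = μ e * ((if i = ep1 e then 1 else 0) - (if i = ep2 e then 1 else 0)))
    (f : V → EuclideanSpace ℝ (Fin d) → ℝ)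
    (hsc : ∀ i, StrongConvexOn Set.univ σ (f i))
    (hdiff : ∀ i, Differentiable ℝ (f i))
    (hsmooth : ∀ i x y, ‖gradient (f i) x - gradient (f i) y‖ ≤ L * ‖x - y‖)
    (FAstar : PiLp 2 (fun _ : E => EuclideanSpace ℝ (Fin d)) → ℝ)
    (hFAstar : ∀ lam, FAstar lam = ∑ i, fenchel (f i) (∑ e, A i e • lam e))
    (e : E) :
    ∀ (lam : PiLp 2 (fun _ : E => EuclideanSpace ℝ (Fin d)))
      (h : EuclideanSpace ℝ (Fin d)),
      FAstar (WithLp.toLp 2 (Function.update lam e (lam e + h))) ≤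
        FAstar lam + (inner ℝ ((gradient FAstar lam) e) h : ℝ) +
          ((4 * μ e ^ 2 * σ⁻¹) / 2) * ‖h‖ ^ 2 :=
  dual_block_smoothness_general d σ hσ ep1 ep2 hloop μ A hA f hsc hdiff FAstar hFAstar e
end

section
/- With F_A* as above, for each edge (ij) and all λ, λ' ∈ ℝ^{E×d}: ‖∇_{ij}F_A*(λ) - ∇_{ij}F_A*(λ')‖ ≤ Σ_{(kl)∼(ij)} √(L_{ij} L_{kl}) · ‖λ_{kl} - λ'_{kl}‖, where L_{ij} = 4 μ_{ij}² σ^{-1} and the sum is over edges (kl) sharing a node with (ij) (including (ij) itself). -/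
open Finset

/-!
A σ-strongly convex function is continuous and coercive, so `x ↦ ⟪x, y⟫ - f x` has a maximiser
`M y`, and by strong convexity at the midpoint it beats every `x` by at least `σ/4 ‖x - M y‖²`.
This margin sandwiches `f*(y') - f*(y) - ⟪M y, y' - y⟫` between `0` and `σ⁻¹ ‖y' - y‖²`, so
`∇f* = M`, and comparing `M y` with `M y'` gives `‖M y - M y'‖ ≤ 2/σ ‖y - y'‖`.
By the chain rule the `e`-block of `∇F_A*(λ)` is `∑ᵢ Aᵢₑ ∇fᵢ*((Aλ)ᵢ)`, hence it moves by at most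
`2/σ ∑_{e'} (∑ᵢ |Aᵢₑ| |Aᵢₑ'|) ‖λₑ' - λ'ₑ'‖`. The inner sum runs over the common endpoints of
`e` and `e'`: it vanishes unless `e' ∼ e` and is at most `2 |μₑ| |μₑ'|`, which turns the
coefficient into `4 |μₑ μₑ'| / σ = √(Lₑ Lₑ')`.
-/

open Filter

open scoped RealInnerProductSpace

namespace StrongConvexOn

variable {F : Type*} [NormedAddCommGroup F] [NormedSpace ℝ F] {f : F → ℝ} {m : ℝ}

lemma continuous [FiniteDimensional ℝ F] (hf : StrongConvexOn Set.univ m f) (hm : 0 ≤ m) :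
    Continuous f :=
  continuousOn_univ.1 ((hf.convexOn fun _ => by positivity).continuousOn isOpen_univ)

lemma add_mul_sq_norm_sub_le {x₀ : F} (hf : StrongConvexOn Set.univ m f)
    (hx₀ : ∀ x, f x₀ ≤ f x) (x : F) : f x₀ + m / 4 * ‖x - x₀‖ ^ 2 ≤ f x := by
  have hmid := hf.2 (Set.mem_univ x) (Set.mem_univ x₀) (by norm_num : (0 : ℝ) ≤ 1 / 2)
    (by norm_num : (0 : ℝ) ≤ 1 / 2) (by norm_num)
  have := hx₀ ((1 / 2 : ℝ) • x + (1 / 2 : ℝ) • x₀)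
  simp only [smul_eq_mul] at hmid
  linarith

lemma tendsto_cocompact_atTop [FiniteDimensional ℝ F] (hf : StrongConvexOn Set.univ m f)
    (hm : 0 < m) : Tendsto f (cocompact F) atTop := by
  obtain ⟨C, hC⟩ := (isCompact_closedBall (0 : F) 1).exists_bound_of_continuousOn
    (hf.continuous hm.le).continuousOn
  have hC0 : |f 0| ≤ C := hC 0 (by simp)
  have hgrowth : ∀ x, 1 ≤ ‖x‖ → ‖x‖ * (m / 2 * ‖x‖ - (2 * C + m / 2)) ≤ f x := by
    intro x hx
    have hx0 : ‖x‖ ≠ 0 := by positivity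
    have hu : |f (‖x‖⁻¹ • x)| ≤ C := hC _ (by simp [norm_smul, hx0])
    -- strong convexity on the segment `[0, x]`, at its point `x / ‖x‖` of the unit ball
    have hseg := hf.2 (Set.mem_univ 0) (Set.mem_univ x)
      (sub_nonneg.2 (inv_le_one_of_one_le₀ hx)) (by positivity) (sub_add_cancel 1 ‖x‖⁻¹)
    simp only [smul_zero, zero_add, zero_sub, norm_neg, smul_eq_mul] at hseg
    have hscaled :
        ‖x‖ * f (‖x‖⁻¹ • x) ≤ (‖x‖ - 1) * f 0 + f x - (‖x‖ - 1) * (m / 2 * ‖x‖) :=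
      calc ‖x‖ * f (‖x‖⁻¹ • x)
          ≤ ‖x‖ * ((1 - ‖x‖⁻¹) * f 0 + ‖x‖⁻¹ * f x
              - (1 - ‖x‖⁻¹) * ‖x‖⁻¹ * (m / 2 * ‖x‖ ^ 2)) :=
            mul_le_mul_of_nonneg_left hseg (norm_nonneg x)
        _ = (‖x‖ - 1) * f 0 + f x - (‖x‖ - 1) * (m / 2 * ‖x‖) := by field_simp
    rw [abs_le] at hu hC0
    nlinarith
  have hquad : Tendsto (fun r : ℝ => r * (m / 2 * r - (2 * C + m / 2))) atTop atTop :=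
    tendsto_id.atTop_mul_atTop₀ (tendsto_atTop_add_const_right _ _
      (tendsto_id.const_mul_atTop (by positivity)))
  refine tendsto_atTop_mono' _ ?_ (hquad.comp tendsto_norm_cocompact_atTop)
  filter_upwards [tendsto_norm_cocompact_atTop.eventually_ge_atTop 1] with x hx
  exact hgrowth x hx

lemma exists_forall_add_mul_sq_norm_sub_le [FiniteDimensional ℝ F]
    (hf : StrongConvexOn Set.univ m f) (hm : 0 < m) :
    ∃ x₀, ∀ x, f x₀ + m / 4 * ‖x - x₀‖ ^ 2 ≤ f x := by
  obtain ⟨x₀, hx₀⟩ := (hf.continuous hm.le).exists_forall_le (hf.tendsto_cocompact_atTop hm)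
  exact ⟨x₀, hf.add_mul_sq_norm_sub_le hx₀⟩

end StrongConvexOn

section InnerProductSpace

variable {F : Type*} [NormedAddCommGroup F] [InnerProductSpace ℝ F]

lemma StrongConvexOn.sub_inner {f : F → ℝ} {m : ℝ} (hf : StrongConvexOn Set.univ m f) (y : F) :
    StrongConvexOn Set.univ m fun x => f x - ⟪x, y⟫ := by
  refine ⟨convex_univ, fun x hx z hz a b ha hb hab => ?_⟩
  have := hf.2 hx hz ha hb hab
  simp only [inner_add_left, real_inner_smul_left, smul_eq_mul] at *
  linarith

variable [CompleteSpace F]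

lemma hasGradientAt_of_abs_sub_sub_inner_le {φ : F → ℝ} {g x : F} {K : ℝ}
    (h : ∀ y, |φ y - φ x - ⟪g, y - x⟫| ≤ K * ‖y - x‖ ^ 2) : HasGradientAt φ g x := by
  rw [hasGradientAt_iff_isLittleO]
  refine (Asymptotics.IsBigO.of_bound K (Eventually.of_forall fun y => ?_)).trans_isLittleO
    ((Asymptotics.isLittleO_norm_pow_id one_lt_two).comp_tendsto
      (tendsto_sub_nhds_zero_iff.2 tendsto_id))
  simpa using h y

lemma HasGradientAt.sum {ι : Type*} {s : Finset ι} {φ : ι → F → ℝ} {g : ι → F} {x : F}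
    (h : ∀ i ∈ s, HasGradientAt (φ i) (g i) x) :
    HasGradientAt (fun y => ∑ i ∈ s, φ i y) (∑ i ∈ s, g i) x := by
  simp only [hasGradientAt_iff_hasFDerivAt, map_sum] at h ⊢
  exact HasFDerivAt.fun_sum h

end InnerProductSpace

section BlockCombination

variable {ι F : Type*} [Fintype ι] [NormedAddCommGroup F] [InnerProductSpace ℝ F]

noncomputable def blockCombination (a : ι → ℝ) : PiLp 2 (fun _ : ι => F) →L[ℝ] F :=
  ∑ e, a e • PiLp.proj 2 (fun _ : ι => F) e

@[simp]
lemma blockCombination_apply (a : ι → ℝ) (lam : PiLp 2 (fun _ : ι => F)) :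
    blockCombination a lam = ∑ e, a e • lam e := by
  simp [blockCombination]

lemma norm_blockCombination_le (a : ι → ℝ) (lam : PiLp 2 (fun _ : ι => F)) :
    ‖blockCombination a lam‖ ≤ ∑ e, |a e| * ‖lam e‖ := by
  rw [blockCombination_apply]
  refine (norm_sum_le _ _).trans_eq (sum_congr rfl fun e _ => ?_)
  rw [norm_smul, Real.norm_eq_abs]

lemma HasGradientAt.comp_blockCombination [CompleteSpace F] {φ : F → ℝ} {g : F} (a : ι → ℝ)
    {lam : PiLp 2 (fun _ : ι => F)} (h : HasGradientAt φ g (blockCombination a lam)) :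
    HasGradientAt (φ ∘ blockCombination a) (WithLp.toLp 2 fun e => a e • g) lam := by
  rw [hasGradientAt_iff_hasFDerivAt] at h ⊢
  refine (h.comp lam (blockCombination a).hasFDerivAt).congr_fderiv
    (ContinuousLinearMap.ext fun v => ?_)
  simp [PiLp.inner_apply, real_inner_smul_left]

lemma norm_sum_smul_sub_sum_smul_le {V E : Type*} [Fintype V] [Fintype E]
    (A : Matrix V E ℝ) (M : V → F → F) {L : ℝ} (hL : 0 ≤ L)
    (hM : ∀ i y y', ‖M i y - M i y'‖ ≤ L * ‖y - y'‖) (lam lam' : PiLp 2 (fun _ : E => F))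
    (e : E) :
    ‖∑ i, A i e • M i (blockCombination (A i) lam) -
        ∑ i, A i e • M i (blockCombination (A i) lam')‖ ≤
      ∑ e', (L * ∑ i, |A i e| * |A i e'|) * ‖lam e' - lam' e'‖ := by
  calc ‖∑ i, A i e • M i (blockCombination (A i) lam) -
          ∑ i, A i e • M i (blockCombination (A i) lam')‖
      = ‖∑ i, A i e •
          (M i (blockCombination (A i) lam) - M i (blockCombination (A i) lam'))‖ := by
        simp only [smul_sub, sum_sub_distrib]
    _ ≤ ∑ i, |A i e| * (L * ∑ e', |A i e'| * ‖lam e' - lam' e'‖) := by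
        refine (norm_sum_le _ _).trans (sum_le_sum fun i _ => ?_)
        rw [norm_smul, Real.norm_eq_abs]
        refine mul_le_mul_of_nonneg_left ((hM i _ _).trans ?_) (abs_nonneg _)
        rw [← map_sub]
        gcongr
        exact norm_blockCombination_le _ _
    _ = ∑ e', (L * ∑ i, |A i e| * |A i e'|) * ‖lam e' - lam' e'‖ := by
        simp only [mul_sum, sum_mul]
        rw [sum_comm]
        exact sum_congr rfl fun _ _ => sum_congr rfl fun _ _ => by ring

end BlockCombination

section Fenchel

variable {d : ℕ} {f : EuclideanSpace ℝ (Fin d) → ℝ} {σ : ℝ}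
  {M : EuclideanSpace ℝ (Fin d) → EuclideanSpace ℝ (Fin d)}

lemma StrongConvexOn.exists_inner_sub_add_le (hf : StrongConvexOn Set.univ σ f) (hσ : 0 < σ)
    (y : EuclideanSpace ℝ (Fin d)) :
    ∃ m, ∀ x, ⟪x, y⟫ - f x + σ / 4 * ‖x - m‖ ^ 2 ≤ ⟪m, y⟫ - f m := by
  obtain ⟨m, hm⟩ := (hf.sub_inner y).exists_forall_add_mul_sq_norm_sub_le hσ
  exact ⟨m, fun x => by linarith [hm x]⟩

lemma fenchel_eq_of_inner_sub_add_le
    (hM : ∀ y x, ⟪x, y⟫ - f x + σ / 4 * ‖x - M y‖ ^ 2 ≤ ⟪M y, y⟫ - f (M y)) (hσ : 0 ≤ σ)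
    (y : EuclideanSpace ℝ (Fin d)) : fenchel f y = ⟪M y, y⟫ - f (M y) := by
  have hle : ∀ x, ⟪x, y⟫ - f x ≤ ⟪M y, y⟫ - f (M y) := fun x => by
    nlinarith [hM y x, sq_nonneg ‖x - M y‖]
  exact le_antisymm (ciSup_le hle) (le_ciSup ⟨_, Set.forall_mem_range.2 hle⟩ (M y))

lemma abs_fenchel_sub_sub_inner_le
    (hM : ∀ y x, ⟪x, y⟫ - f x + σ / 4 * ‖x - M y‖ ^ 2 ≤ ⟪M y, y⟫ - f (M y)) (hσ : 0 < σ)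
    (y y' : EuclideanSpace ℝ (Fin d)) :
    |fenchel f y' - fenchel f y - ⟪M y, y' - y⟫| ≤ σ⁻¹ * ‖y' - y‖ ^ 2 := by
  rw [fenchel_eq_of_inner_sub_add_le hM hσ.le, fenchel_eq_of_inner_sub_add_le hM hσ.le]
  have hlow := hM y' (M y)
  have hupp := hM y (M y')
  have hcs := real_inner_le_norm (M y' - M y) (y' - y)
  have hamgm :
      ‖M y' - M y‖ * ‖y' - y‖ - σ / 4 * ‖M y' - M y‖ ^ 2 ≤ σ⁻¹ * ‖y' - y‖ ^ 2 := by
    have := sq_nonneg (σ / 2 * ‖M y' - M y‖ - ‖y' - y‖)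
    field_simp
    nlinarith
  simp only [inner_sub_left, inner_sub_right] at *
  rw [abs_le]
  constructor <;> nlinarith [sq_nonneg ‖M y - M y'‖, norm_sub_rev (M y) (M y')]

lemma norm_sub_le_of_inner_sub_add_le
    (hM : ∀ y x, ⟪x, y⟫ - f x + σ / 4 * ‖x - M y‖ ^ 2 ≤ ⟪M y, y⟫ - f (M y)) (hσ : 0 < σ)
    (y y' : EuclideanSpace ℝ (Fin d)) : ‖M y - M y'‖ ≤ 2 / σ * ‖y - y'‖ := by
  have h1 := hM y (M y')
  have h2 := hM y' (M y)
  have hcs := real_inner_le_norm (M y - M y') (y - y')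
  rw [norm_sub_rev (M y') (M y)] at h1
  have hmono : σ / 2 * ‖M y - M y'‖ ^ 2 ≤ ‖M y - M y'‖ * ‖y - y'‖ := by
    simp only [inner_sub_left, inner_sub_right] at hcs
    linarith
  rcases (norm_nonneg (M y - M y')).eq_or_lt with h0 | hpos
  · rw [← h0]; positivity
  · rw [div_mul_eq_mul_div, le_div_iff₀ hσ]
    nlinarith

lemma StrongConvexOn.exists_hasGradientAt_fenchel (hf : StrongConvexOn Set.univ σ f)
    (hσ : 0 < σ) :
    ∃ M : EuclideanSpace ℝ (Fin d) → EuclideanSpace ℝ (Fin d),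
      (∀ y, HasGradientAt (fenchel f) (M y) y) ∧ ∀ y y', ‖M y - M y'‖ ≤ 2 / σ * ‖y - y'‖ := by
  choose M hM using hf.exists_inner_sub_add_le hσ
  exact ⟨M, fun y => hasGradientAt_of_abs_sub_sub_inner_le (abs_fenchel_sub_sub_inner_le hM hσ y),
    norm_sub_le_of_inner_sub_add_le hM hσ⟩

end Fenchel

section Incidence

variable {V E : Type*} [DecidableEq V] {ep1 ep2 : E → V} {μ : E → ℝ} {A : Matrix V E ℝ}

lemma abs_incidence_eq (hloop : ∀ e, ep1 e ≠ ep2 e)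
    (hA : ∀ e i, A i e = μ e * ((if i = ep1 e then 1 else 0) - (if i = ep2 e then 1 else 0)))
    (i : V) (e : E) : |A i e| = if i = ep1 e ∨ i = ep2 e then |μ e| else 0 := by
  rw [hA]
  by_cases h1 : i = ep1 e <;> by_cases h2 : i = ep2 e
  · exact absurd (h1 ▸ h2) (hloop e)
  all_goals simp [h1, h2, hloop e, (hloop e).symm]

variable [Fintype V]

lemma sum_abs_incidence_mul_abs_le (hloop : ∀ e, ep1 e ≠ ep2 e)
    (hA : ∀ e i, A i e = μ e * ((if i = ep1 e then 1 else 0) - (if i = ep2 e then 1 else 0)))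
    (e e' : E) :
    ∑ i, |A i e| * |A i e'| ≤
      if ep1 e' = ep1 e ∨ ep1 e' = ep2 e ∨ ep2 e' = ep1 e ∨ ep2 e' = ep2 e then
        2 * (|μ e| * |μ e'|) else 0 := by
  have hsupp : ∀ i ∉ ({ep1 e, ep2 e} : Finset V), |A i e| * |A i e'| = 0 := fun i hi => by
    simp only [mem_insert, mem_singleton] at hi
    simp [abs_incidence_eq hloop hA i e, hi]
  rw [← sum_subset (subset_univ _) fun i _ => hsupp i, sum_pair (hloop e)]
  simp only [abs_incidence_eq hloop hA]
  have := hloop e'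
  split_ifs <;> simp_all [eq_comm] <;> nlinarith [abs_nonneg (μ e), abs_nonneg (μ e')]

lemma two_div_mul_sum_abs_incidence_mul_abs_le {σ : ℝ} (hσ : 0 < σ)
    (hloop : ∀ e, ep1 e ≠ ep2 e)
    (hA : ∀ e i, A i e = μ e * ((if i = ep1 e then 1 else 0) - (if i = ep2 e then 1 else 0)))
    (e e' : E) :
    2 / σ * ∑ i, |A i e| * |A i e'| ≤
      if ep1 e' = ep1 e ∨ ep1 e' = ep2 e ∨ ep2 e' = ep1 e ∨ ep2 e' = ep2 e then
        √((4 * μ e ^ 2 * σ⁻¹) * (4 * μ e' ^ 2 * σ⁻¹)) else 0 := by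
  have hsqrt : √((4 * μ e ^ 2 * σ⁻¹) * (4 * μ e' ^ 2 * σ⁻¹)) = 4 * (|μ e| * |μ e'|) * σ⁻¹ := by
    rw [← Real.sqrt_sq (by positivity : 0 ≤ 4 * (|μ e| * |μ e'|) * σ⁻¹)]
    congr 1
    simp only [mul_pow, sq_abs]
    ring
  calc 2 / σ * ∑ i, |A i e| * |A i e'|
      ≤ 2 / σ * if ep1 e' = ep1 e ∨ ep1 e' = ep2 e ∨ ep2 e' = ep1 e ∨ ep2 e' = ep2 e then
          2 * (|μ e| * |μ e'|) else 0 := by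
        gcongr
        exact sum_abs_incidence_mul_abs_le hloop hA e e'
    _ = _ := by
        split_ifs
        · rw [hsqrt]
          ring
        · simp

end Incidence

theorem dual_block_gradient_local_lipschitz_general
    {V E : Type*} [Fintype V] [Fintype E] [DecidableEq V]
    (d : ℕ) (σ : ℝ) (hσ : 0 < σ)
    (ep1 ep2 : E → V) (hloop : ∀ e, ep1 e ≠ ep2 e)
    (μ : E → ℝ)
    (A : Matrix V E ℝ)
    (hA : ∀ e i, A i e = μ e * ((if i = ep1 e then 1 else 0) - (if i = ep2 e then 1 else 0)))
    (f : V → EuclideanSpace ℝ (Fin d) → ℝ)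
    (hsc : ∀ i, StrongConvexOn Set.univ σ (f i))
    (FAstar : PiLp 2 (fun _ : E => EuclideanSpace ℝ (Fin d)) → ℝ)
    (hFAstar : ∀ lam, FAstar lam = ∑ i, fenchel (f i) (∑ e, A i e • lam e))
    (e : E) :
    ∀ lam lam' : PiLp 2 (fun _ : E => EuclideanSpace ℝ (Fin d)),
      ‖(gradient FAstar lam) e - (gradient FAstar lam') e‖ ≤
        ∑ e' ∈ univ.filter (fun e' =>
            ep1 e' = ep1 e ∨ ep1 e' = ep2 e ∨ ep2 e' = ep1 e ∨ ep2 e' = ep2 e),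
          Real.sqrt ((4 * μ e ^ 2 * σ⁻¹) * (4 * μ e' ^ 2 * σ⁻¹)) * ‖lam e' - lam' e'‖ := by
  choose M hMgrad hMlip using fun i => (hsc i).exists_hasGradientAt_fenchel hσ
  have hgrad : ∀ lam, HasGradientAt FAstar
      (∑ i, WithLp.toLp 2 fun e' => A i e' • M i (blockCombination (A i) lam)) lam := by
    intro lam
    have hF : FAstar = fun lam => ∑ i, (fenchel (f i) ∘ blockCombination (A i)) lam :=
      funext fun lam => by simp [hFAstar]
    exact hF ▸ HasGradientAt.sum fun i _ => (hMgrad i _).comp_blockCombination (A i)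
  intro lam lam'
  rw [(hgrad lam).gradient, (hgrad lam').gradient]
  simp only [WithLp.ofLp_sum, Finset.sum_apply]
  refine (norm_sum_smul_sub_sum_smul_le A M (by positivity) hMlip lam lam' e).trans ?_
  rw [sum_filter]
  refine sum_le_sum fun e' _ => ?_
  rw [← zero_mul ‖lam e' - lam' e'‖, ← ite_mul]
  exact mul_le_mul_of_nonneg_right
    (two_div_mul_sum_abs_incidence_mul_abs_le hσ hloop hA e e') (norm_nonneg _)

theorem dual_block_gradient_local_lipschitz
    {V E : Type*} [Fintype V] [Fintype E] [DecidableEq V] [DecidableEq E]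
    (d : ℕ) (σ : ℝ) (hσ : 0 < σ)
    (ep1 ep2 : E → V) (hloop : ∀ e, ep1 e ≠ ep2 e)
    (μ : E → ℝ) (hμ : ∀ e, μ e ≠ 0)
    (A : Matrix V E ℝ)
    (hA : ∀ e i, A i e = μ e * ((if i = ep1 e then 1 else 0) - (if i = ep2 e then 1 else 0)))
    (f : V → EuclideanSpace ℝ (Fin d) → ℝ)
    (hsc : ∀ i, StrongConvexOn Set.univ σ (f i))
    (FAstar : PiLp 2 (fun _ : E => EuclideanSpace ℝ (Fin d)) → ℝ)
    (hFAstar : ∀ lam, FAstar lam = ∑ i, fenchel (f i) (∑ e, A i e • lam e))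
    (e : E) :
    ∀ lam lam' : PiLp 2 (fun _ : E => EuclideanSpace ℝ (Fin d)),
      ‖(gradient FAstar lam) e - (gradient FAstar lam') e‖ ≤
        ∑ e' ∈ univ.filter (fun e' =>
            ep1 e' = ep1 e ∨ ep1 e' = ep2 e ∨ ep2 e' = ep1 e ∨ ep2 e' = ep2 e),
          Real.sqrt ((4 * μ e ^ 2 * σ⁻¹) * (4 * μ e' ^ 2 * σ⁻¹)) * ‖lam e' - lam' e'‖ :=
  dual_block_gradient_local_lipschitz_general d σ hσ ep1 ep2 hloop μ A hA f hsc FAstar hFAstar e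
end
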